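/- For any graph G, the TAR reconfiguration threshold of G is at most max(pw(G), 1), where pw(G) is the pathwidth of G. -/

import Mathlib

/-!
A path decomposition of width `k` gives every vertex `v` an interval `[lo v, hi v]` of bag
indices such that adjacent vertices have meeting intervals and no index lies in more than
`k + 1` intervals. Put `P = I \ J`, `Q = J \ I` and `K = max k 1`. The tokens of `Q` are placed
one at a time, each time after removing the tokens of `P` whose intervals meet a placed token;
this stays within the threshold as soon as every nonempty prefix `B` of the order on `Q` meets
at most `|B| + K - 1` intervals of `P`.

Such an order is built recursively, with a slack `D` (initially `0`): take an inclusion-minimal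
nonempty `S ⊆ Q` meeting at most `|S| + D` intervals of `P`, list `S` by increasing right
endpoint, and continue with `Q \ S` against the intervals of `P` not meeting `S`. For a prefix
`H` of `S` ending at `v`, the intervals of `P` meeting `H` either contain `hi v`, and compete
with `v` for the `K + 1` places there, or end before `hi v`; the latter are counted by cutting
`S` at the largest such right endpoint and using the minimality of `S`.
-/

/-- `S` is an independent set in `G`. -/
def IsIndepSet {V : Type*} (G : SimpleGraph V) (S : Finset V) : Prop :=
  ∀ u ∈ S, ∀ v ∈ S, ¬ G.Adj u v

/-- `G` has a path decomposition of width at most `k`. -/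
def HasPathDecompOfWidth {V : Type*} (G : SimpleGraph V) (k : ℕ) : Prop :=
  ∃ (r : ℕ) (X : ℕ → Finset V),
    (∀ v : V, ∃ i ≤ r, v ∈ X i) ∧
    (∀ u v : V, G.Adj u v → ∃ i ≤ r, u ∈ X i ∧ v ∈ X i) ∧
    (∀ (v : V) (i j l : ℕ), i ≤ j → j ≤ l → l ≤ r → v ∈ X i → v ∈ X l → v ∈ X j) ∧
    (∀ i ≤ r, (X i).card ≤ k + 1)

/-- `A` can be `k`-TAR reconfigured to `B` in `G`. -/
def TARReconf {V : Type*} [DecidableEq V] (G : SimpleGraph V) (k : ℕ)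
    (A B : Finset V) : Prop :=
  ∃ (n : ℕ) (W : ℕ → Finset V), W 0 = A ∧ W n = B ∧
    (∀ i ≤ n, IsIndepSet G (W i) ∧ A.card ≤ (W i).card + k) ∧
    (∀ i < n, (symmDiff (W i) (W (i + 1))).card ≤ 1)

open Finset Relation

section Reconfiguration

variable {V : Type*} (G : SimpleGraph V)

theorem IsIndepSet.mono {A B : Finset V} (hB : IsIndepSet G B) (hAB : A ⊆ B) :
    IsIndepSet G A :=
  fun u hu v hv => hB u (hAB hu) v (hAB hv)

variable [DecidableEq V]

def TARStep (m : ℕ) (A B : Finset V) : Prop :=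
  IsIndepSet G A ∧ IsIndepSet G B ∧ m ≤ A.card ∧ m ≤ B.card ∧ (symmDiff A B).card ≤ 1

instance (m : ℕ) : Std.Symm (TARStep G m) where
  symm _ _ := fun ⟨hA, hB, hmA, hmB, hAB⟩ =>
    ⟨hB, hA, hmB, hmA, symmDiff_comm (α := Finset V) _ _ ▸ hAB⟩

theorem card_symmDiff_insert_le (A : Finset V) (x : V) : (symmDiff A (insert x A)).card ≤ 1 := by
  rw [symmDiff_of_le (subset_insert x A), card_sdiff_of_subset (subset_insert x A)]
  have := card_insert_le x A
  omega

theorem reflTransGen_tarStep_of_subset {m : ℕ} {A B : Finset V} (hAB : A ⊆ B)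
    (hB : IsIndepSet G B) (hmA : m ≤ A.card) : ReflTransGen (TARStep G m) A B := by
  suffices ∀ s : Finset V, IsIndepSet G (A ∪ s) → ReflTransGen (TARStep G m) A (A ∪ s) by
    simpa [union_sdiff_of_subset hAB] using this (B \ A) (by rwa [union_sdiff_of_subset hAB])
  intro s
  induction s using Finset.induction_on with
  | empty => simpa using fun _ => ReflTransGen.refl
  | insert x s _ ih =>
    intro hs
    rw [union_insert] at hs ⊢
    have hs' : IsIndepSet G (A ∪ s) := hs.mono G (subset_insert x _)
    refine (ih hs').tail ⟨hs', hs, ?_, ?_, card_symmDiff_insert_le _ _⟩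
    · exact hmA.trans (card_le_card subset_union_left)
    · exact hmA.trans (card_le_card (subset_union_left.trans (subset_insert x _)))

theorem reflTransGen_tarStep_of_superset {m : ℕ} {A B : Finset V} (hBA : B ⊆ A)
    (hA : IsIndepSet G A) (hmB : m ≤ B.card) : ReflTransGen (TARStep G m) A B :=
  symm (reflTransGen_tarStep_of_subset G hBA hA hmB)

theorem tarReconf_of_reflTransGen {k : ℕ} {A B : Finset V} (hA : IsIndepSet G A)
    (h : ReflTransGen (TARStep G (A.card - k)) A B) : TARReconf G k A B := by
  induction h with
  | refl => exact ⟨0, fun _ => A, rfl, rfl, fun _ _ => ⟨hA, Nat.le_add_right _ _⟩, by simp⟩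
  | @tail B C _ hBC ih =>
    obtain ⟨n, W, hW0, hWn, hW, hstep⟩ := ih
    obtain ⟨-, hC, -, hmC, hBC⟩ := hBC
    refine ⟨n + 1, fun i => if i = n + 1 then C else W i, by simpa, by simp, ?_, ?_⟩
    · intro i hi
      dsimp only
      split_ifs
      · exact ⟨hC, by omega⟩
      · exact hW i (by omega)
    · intro i hi
      rcases Nat.lt_succ_iff_lt_or_eq.mp hi with hi | rfl
      · simpa [(Nat.lt_succ_of_lt hi).ne, hi.ne] using hstep i hi
      · simpa [hWn] using hBC

end Reconfiguration

section Intervals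

variable {V : Type*} (lo hi : V → ℕ)

def stab (A : Finset V) (t : ℕ) : Finset V :=
  A.filter fun x => lo x ≤ t ∧ t ≤ hi x

def meeting (P S : Finset V) : Finset V :=
  P.filter fun u => ∃ v ∈ S, lo u ≤ hi v ∧ lo v ≤ hi u

def IsCluster (P : Finset V) (D : ℕ) (S : Finset V) : Prop :=
  S.Nonempty ∧ (meeting lo hi P S).card ≤ S.card + D

def FewMeeting (P Q : Finset V) (c : ℕ) (B : Finset V) : Prop :=
  B ⊆ Q ∧ (meeting lo hi P B).card + 1 ≤ B.card + c

variable {lo hi}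

theorem meeting_subset (P S : Finset V) : meeting lo hi P S ⊆ P :=
  filter_subset _ _

theorem meeting_mono {P S T : Finset V} (h : S ⊆ T) : meeting lo hi P S ⊆ meeting lo hi P T :=
  monotone_filter_right _ fun _ _ ⟨v, hv, hm⟩ => ⟨v, h hv, hm⟩

@[simp]
theorem meeting_empty (P : Finset V) : meeting lo hi P ∅ = ∅ := by
  simp [meeting]

theorem filter_meeting_subset_stab {P H : Finset V} {v : V} (hv : ∀ a ∈ H, hi a ≤ hi v) :
    (meeting lo hi P H).filter (hi v ≤ hi ·) ⊆ stab lo hi P (hi v) := by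
  intro u hu
  obtain ⟨huZ, hvu⟩ := mem_filter.mp hu
  obtain ⟨huP, a, haH, hua, -⟩ := mem_filter.mp huZ
  exact mem_filter.mpr ⟨huP, hua.trans (hv a haH), hvu⟩

variable [DecidableEq V]

theorem meeting_sdiff_subset (P R S : Finset V) :
    meeting lo hi (P \ R) S ⊆ meeting lo hi P S \ R := by
  intro u
  simp only [meeting, mem_filter, mem_sdiff]
  tauto

theorem meeting_union_subset (P S T : Finset V) :
    meeting lo hi P (S ∪ T) ⊆ meeting lo hi P S ∪ meeting lo hi (P \ meeting lo hi P S) T := by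
  intro u
  simp only [meeting, mem_filter, mem_union, mem_sdiff]
  grind

theorem card_stab_add_card_stab_le {K : ℕ} (hload : ∀ A t, (stab lo hi A t).card ≤ K + 1)
    {P S : Finset V} (hPS : Disjoint P S) (t : ℕ) :
    (stab lo hi P t).card + (stab lo hi S t).card ≤ K + 1 := by
  have h := hload (P ∪ S) t
  rwa [stab, filter_union,
    card_union_of_disjoint (hPS.mono (filter_subset _ _) (filter_subset _ _))] at h

end Intervals

section InsertStep

variable {V : Type*} [DecidableEq V]

def InsertStep (p : Finset V → Prop) (A B : Finset V) : Prop :=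
  ∃ x ∉ A, B = insert x A ∧ p B

theorem reflTransGen_insertStep_lowerSegments (f : V → ℕ) (S : Finset V) :
    ReflTransGen (InsertStep fun B => B ⊆ S ∧ ∀ a ∈ B, ∀ b ∈ S \ B, f a ≤ f b) ∅ S := by
  induction S using Finset.induction_on_max_value f with
  | empty => rfl
  | insert a s ha hmax ih =>
    refine (ReflTransGen.mono ?_ _ _ ih).tail ⟨a, ha, rfl, subset_refl _, by simp⟩
    rintro A B ⟨x, hx, rfl, hBs, hseg⟩
    refine ⟨x, hx, rfl, hBs.trans (subset_insert a s), fun c hc b hb => ?_⟩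
    obtain ⟨hb, hbB⟩ := mem_sdiff.mp hb
    rcases mem_insert.mp hb with rfl | hbs
    · exact hmax c (hBs hc)
    · exact hseg c hc b (mem_sdiff.mpr ⟨hbs, hbB⟩)

end InsertStep

section Clusters

variable {V : Type*} [DecidableEq V] {lo hi : V → ℕ} {K D : ℕ} {P S H : Finset V}

theorem card_filter_hi_le_add_one_le_of_minimal
    (hS : Minimal (IsCluster lo hi P D) S) {p : ℕ}
    (hlow : ∃ a ∈ S, lo a ≤ p) (hhigh : ∃ w ∈ S, p < lo w) :
    ((meeting lo hi P S).filter (hi · ≤ p)).card + 1 ≤ (S.filter (lo · ≤ p)).card := by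
  set T := S.filter fun w => ¬ lo w ≤ p
  obtain ⟨a, haS, hap⟩ := hlow
  obtain ⟨w, hwS, hpw⟩ := hhigh
  have hTS : T < S :=
    (filter_subset _ _).ssubset_of_not_subset fun h => (mem_filter.mp (h haS)).2 hap
  have hT : T.card + D + 1 ≤ (meeting lo hi P T).card := by
    have := hS.not_prop_of_lt hTS
    simp only [IsCluster, show T.Nonempty from ⟨w, mem_filter.mpr ⟨hwS, by omega⟩⟩, true_and,
      not_le] at this
    omega
  have hdisj : Disjoint ((meeting lo hi P S).filter (hi · ≤ p)) (meeting lo hi P T) := by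
    refine disjoint_left.mpr fun z hz hzT => ?_
    obtain ⟨-, w, hwT, -, hwz⟩ := mem_filter.mp hzT
    have := (mem_filter.mp hz).2
    have := (mem_filter.mp hwT).2
    omega
  have hsub : (meeting lo hi P S).filter (hi · ≤ p) ∪ meeting lo hi P T ⊆ meeting lo hi P S :=
    union_subset (filter_subset _ _) (meeting_mono (filter_subset _ _))
  replace hsub := card_le_card hsub
  rw [card_union_of_disjoint hdisj] at hsub
  have hST : (S.filter (lo · ≤ p)).card + T.card = S.card := card_filter_add_card_filter_not _
  have := hS.1.2
  omega

theorem card_sdiff_add_one_le_of_forall_lo_le (hload : ∀ A t, (stab lo hi A t).card ≤ K + 1)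
    (hPS : Disjoint P S) (hHS : H ⊆ S) {u v : V} {p : ℕ} (hu : u ∈ stab lo hi P p) (hv : v ∈ H)
    (hpv : p ≤ hi v) (hlo : ∀ w ∈ S, lo w ≤ p) (hseg : ∀ b ∈ S \ H, hi v ≤ hi b) :
    (S \ H).card + 1 ≤ K := by
  have hsub : insert v (S \ H) ⊆ stab lo hi S p := by
    intro w hw
    rcases mem_insert.mp hw with rfl | hw
    · exact mem_filter.mpr ⟨hHS hv, hlo _ (hHS hv), hpv⟩
    · obtain ⟨hwS, -⟩ := mem_sdiff.mp hw
      exact mem_filter.mpr ⟨hwS, hlo w hwS, hpv.trans (hseg w hw)⟩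
  have := card_le_card hsub
  rw [card_insert_of_notMem fun h => (mem_sdiff.mp h).2 hv] at this
  have := card_pos.mpr ⟨u, hu⟩
  have := card_stab_add_card_stab_le hload hPS p
  omega

theorem card_meeting_add_one_le_of_lowerSegment (hlh : ∀ x, lo x ≤ hi x)
    (hload : ∀ A t, (stab lo hi A t).card ≤ K + 1) (hPS : Disjoint P S)
    (hS : Minimal (IsCluster lo hi P D) S)
    (hHS : H ⊆ S) (hH : H.Nonempty) (hseg : ∀ a ∈ H, ∀ b ∈ S \ H, hi a ≤ hi b) :
    (meeting lo hi P H).card + 1 ≤ H.card + (K + D) := by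
  obtain ⟨v, hv, hvmax⟩ := H.exists_max_image hi hH
  set ZL := (meeting lo hi P H).filter fun u => ¬ hi v ≤ hi u
  have hZ : ((meeting lo hi P H).filter (hi v ≤ hi ·)).card + ZL.card =
      (meeting lo hi P H).card :=
    card_filter_add_card_filter_not _
  have hZc := card_le_card (filter_meeting_subset_stab (lo := lo) (P := P) hvmax)
  have hload_v := card_stab_add_card_stab_le hload hPS (hi v)
  have hvS : v ∈ stab lo hi S (hi v) := mem_filter.mpr ⟨hHS hv, hlh v, le_rfl⟩
  have := card_pos.mpr hH
  rcases ZL.eq_empty_or_nonempty with hZL | hZL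
  · have := card_pos.mpr ⟨v, hvS⟩
    rw [hZL, card_empty] at hZ
    omega
  -- `u` is the interval meeting `H` that ends last before `hi v`; cut `S` at `hi u`
  obtain ⟨u, hu, humax⟩ := ZL.exists_max_image hi hZL
  obtain ⟨huZ, huv⟩ := mem_filter.mp hu
  obtain ⟨huP, a, haH, -, hau⟩ := mem_filter.mp huZ
  by_cases hhigh : ∃ w ∈ S, hi u < lo w
  · have hcut := card_filter_hi_le_add_one_le_of_minimal hS ⟨a, hHS haH, hau⟩ hhigh
    have hZL : ZL ⊆ (meeting lo hi P S).filter (hi · ≤ hi u) := fun z hz =>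
      mem_filter.mpr ⟨meeting_mono hHS (mem_filter.mp hz).1, humax z hz⟩
    have hlow : S.filter (lo · ≤ hi u) ⊆ H ∪ (stab lo hi S (hi v)).erase v := by
      intro w hw
      obtain ⟨hwS, hwu⟩ := mem_filter.mp hw
      by_cases hwH : w ∈ H
      · exact mem_union_left _ hwH
      refine mem_union_right _ (mem_erase.mpr ⟨fun h => hwH (h ▸ hv), mem_filter.mpr ⟨hwS, ?_, ?_⟩⟩)
      · omega
      · exact hseg v hv w (mem_sdiff.mpr ⟨hwS, hwH⟩)
    have := card_le_card hZL
    have := (card_le_card hlow).trans (card_union_le _ _)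
    have := card_erase_add_one hvS
    omega
  · push Not at hhigh
    have := card_sdiff_add_one_le_of_forall_lo_le hload hPS hHS
      (mem_filter.mpr ⟨huP, hlh u, le_rfl⟩) hv (lt_of_not_ge huv).le hhigh (hseg v hv)
    have := (card_le_card (meeting_mono (P := P) hHS)).trans hS.1.2
    have := card_sdiff_add_card_eq_card hHS
    omega

end Clusters

section Chains

variable {V : Type*} [DecidableEq V] {lo hi : V → ℕ} {K : ℕ}

theorem InsertStep.union_left {P Q S A B : Finset V} {c c' : ℕ} (hSQ : S ⊆ Q)
    (hc : (meeting lo hi P S).card + c' ≤ S.card + c)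
    (h : InsertStep (FewMeeting lo hi (P \ meeting lo hi P S) (Q \ S) c') A B) :
    InsertStep (FewMeeting lo hi P Q c) (S ∪ A) (S ∪ B) := by
  obtain ⟨x, hxA, rfl, hBQ, hB⟩ := h
  have hxS : x ∉ S := (mem_sdiff.mp (hBQ (mem_insert_self x A))).2
  refine ⟨x, by simp [hxA, hxS], union_insert x S A, union_subset hSQ (hBQ.trans sdiff_subset),
    ?_⟩
  have := (card_le_card (meeting_union_subset (lo := lo) (hi := hi) P S (insert x A))).trans
    (card_union_le _ _)
  rw [card_union_of_disjoint (disjoint_of_subset_right hBQ disjoint_sdiff)]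
  omega

theorem reflTransGen_insertStep_fewMeeting (hlh : ∀ x, lo x ≤ hi x)
    (hload : ∀ A t, (stab lo hi A t).card ≤ K + 1) {P Q : Finset V} {D : ℕ} (hPQ : Disjoint P Q)
    (hQ : (meeting lo hi P Q).card ≤ Q.card + D) :
    ReflTransGen (InsertStep (FewMeeting lo hi P Q (K + D))) ∅ Q := by
  induction Q using Finset.strongInduction generalizing P D with
  | H Q ih =>
  rcases Q.eq_empty_or_nonempty with rfl | hQne
  · rfl
  obtain ⟨S, hSQ, hS⟩ := exists_minimal_le_of_wellFoundedLT (IsCluster lo hi P D) Q ⟨hQne, hQ⟩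
  have hfirst : ReflTransGen (InsertStep (FewMeeting lo hi P Q (K + D))) ∅ S := by
    refine ReflTransGen.mono ?_ _ _ (reflTransGen_insertStep_lowerSegments hi S)
    rintro A B ⟨x, hx, rfl, hBS, hseg⟩
    exact ⟨x, hx, rfl, hBS.trans hSQ, card_meeting_add_one_le_of_lowerSegment hlh hload
      (hPQ.mono_right hSQ) hS hBS (insert_nonempty x A) hseg⟩
  set D' := D + S.card - (meeting lo hi P S).card
  have hNS := hS.1.2
  have hbound : (meeting lo hi (P \ meeting lo hi P S) (Q \ S)).card ≤ (Q \ S).card + D' := by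
    have hsub : meeting lo hi (P \ meeting lo hi P S) (Q \ S) ⊆
        meeting lo hi P Q \ meeting lo hi P S :=
      (meeting_sdiff_subset _ _ _).trans
        (sdiff_subset_sdiff (meeting_mono sdiff_subset) subset_rfl)
    have hSQ' : meeting lo hi P S ⊆ meeting lo hi P Q := meeting_mono hSQ
    have := card_le_card hsub
    rw [card_sdiff_of_subset hSQ'] at this
    rw [card_sdiff_of_subset hSQ]
    have := card_le_card hSQ
    have := card_le_card hSQ'
    omega
  have hrest := ih (Q \ S) (sdiff_ssubset hSQ hS.1.1) (hPQ.mono sdiff_subset sdiff_subset) hbound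
  have hsecond :
      ReflTransGen (InsertStep (FewMeeting lo hi P Q (K + D))) (S ∪ ∅) (S ∪ (Q \ S)) :=
    ReflTransGen.lift' (S ∪ ·)
      (fun A B h => ReflTransGen.single (h.union_left (c := K + D) hSQ (by omega))) _ _ hrest
  rw [union_empty, union_sdiff_of_subset hSQ] at hsecond
  exact hfirst.trans hsecond

end Chains

theorem HasPathDecompOfWidth.exists_intervals {V : Type*} {G : SimpleGraph V} {k : ℕ}
    (h : HasPathDecompOfWidth G k) :
    ∃ lo hi : V → ℕ, (∀ v, lo v ≤ hi v) ∧ (∀ u v, G.Adj u v → lo u ≤ hi v ∧ lo v ≤ hi u) ∧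
      ∀ (A : Finset V) (t : ℕ), (stab lo hi A t).card ≤ k + 1 := by
  classical
  obtain ⟨r, X, hcover, hedge, hconv, hsize⟩ := h
  refine ⟨fun v => Nat.find (hcover v), fun v => Nat.findGreatest (v ∈ X ·) r,
    fun v => Nat.le_findGreatest (Nat.find_spec (hcover v)).1 (Nat.find_spec (hcover v)).2,
    fun u v huv => ?_, fun A t => ?_⟩
  · obtain ⟨i, hir, hu, hv⟩ := hedge u v huv
    exact ⟨(Nat.find_min' _ ⟨hir, hu⟩).trans (Nat.le_findGreatest hir hv),
      (Nat.find_min' _ ⟨hir, hv⟩).trans (Nat.le_findGreatest hir hu)⟩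
  by_cases ht : t ≤ r
  · refine (card_le_card fun x hx => ?_).trans (hsize t ht)
    obtain ⟨-, hlo, hhi⟩ := mem_filter.mp hx
    obtain ⟨hr, hxlo⟩ := Nat.find_spec (hcover x)
    exact hconv x _ t _ hlo hhi (Nat.findGreatest_le r) hxlo
      (Nat.findGreatest_spec (P := (x ∈ X ·)) hr hxlo)
  · rw [stab, filter_false_of_mem fun x _ h => ht (h.2.trans (Nat.findGreatest_le r))]
    simp

section Hybrid

variable {V : Type*} [DecidableEq V] {G : SimpleGraph V} {lo hi : V → ℕ} {I J : Finset V}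

variable (lo hi I J) in
def hybrid (B : Finset V) : Finset V :=
  I \ meeting lo hi (I \ J) B ∪ B

theorem isIndepSet_hybrid (hadj : ∀ u v, G.Adj u v → lo u ≤ hi v ∧ lo v ≤ hi u)
    (hI : IsIndepSet G I) (hJ : IsIndepSet G J) {B : Finset V} (hBJ : B ⊆ J) :
    IsIndepSet G (hybrid lo hi I J B) := by
  have hcross : ∀ x ∈ I \ meeting lo hi (I \ J) B, ∀ y ∈ B, ¬ G.Adj x y := by
    intro x hx y hy hxy
    obtain ⟨hxI, hxN⟩ := mem_sdiff.mp hx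
    by_cases hxJ : x ∈ J
    · exact hJ x hxJ y (hBJ hy) hxy
    · exact hxN (mem_filter.mpr ⟨mem_sdiff.mpr ⟨hxI, hxJ⟩, y, hy, hadj x y hxy⟩)
  intro u hu v hv huv
  rcases mem_union.mp hu with hu | hu <;> rcases mem_union.mp hv with hv | hv
  · exact hI u (mem_sdiff.mp hu).1 v (mem_sdiff.mp hv).1 huv
  · exact hcross u hu v hv huv
  · exact hcross v hv u hu huv.symm
  · exact hJ u (hBJ hu) v (hBJ hv) huv

theorem reflTransGen_tarStep_hybrid (hadj : ∀ u v, G.Adj u v → lo u ≤ hi v ∧ lo v ≤ hi u)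
    (hI : IsIndepSet G I) (hJ : IsIndepSet G J) {c : ℕ} {A B : Finset V}
    (h : InsertStep (FewMeeting lo hi (I \ J) (J \ I) c) A B) :
    ReflTransGen (TARStep G (I.card - c)) (hybrid lo hi I J A) (hybrid lo hi I J B) := by
  obtain ⟨x, hx, rfl, hBQ, hB⟩ := h
  have hAQ : A ⊆ J \ I := (subset_insert x A).trans hBQ
  set N := meeting lo hi (I \ J) (insert x A)
  have hNI : N ⊆ I := (meeting_subset _ _).trans sdiff_subset
  have hM : I.card - c ≤ (I \ N ∪ A).card := by
    have hdisj : Disjoint (I \ N) A :=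
      disjoint_of_subset_left sdiff_subset (disjoint_of_subset_right hAQ disjoint_sdiff)
    rw [card_union_of_disjoint hdisj, card_sdiff_of_subset hNI]
    rw [card_insert_of_notMem hx] at hB
    have := card_le_card hNI
    omega
  refine (reflTransGen_tarStep_of_superset G ?_ (isIndepSet_hybrid hadj hI hJ
    (hAQ.trans sdiff_subset)) hM).trans (reflTransGen_tarStep_of_subset G ?_
    (isIndepSet_hybrid hadj hI hJ (hBQ.trans sdiff_subset)) hM)
  · exact union_subset_union (sdiff_subset_sdiff subset_rfl (meeting_mono (subset_insert x A)))
      subset_rfl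
  · exact union_subset_union subset_rfl (subset_insert x A)

theorem subset_hybrid_sdiff : J ⊆ hybrid lo hi I J (J \ I) := by
  intro x hx
  by_cases hxI : x ∈ I
  · exact mem_union_left _
      (mem_sdiff.mpr ⟨hxI, fun h => (mem_sdiff.mp (meeting_subset _ _ h)).2 hx⟩)
  · exact mem_union_right _ (mem_sdiff.mpr ⟨hx, hxI⟩)

end Hybrid

theorem tar_le_pathwidth_general {V : Type*} [DecidableEq V] (G : SimpleGraph V)
    (k : ℕ) (hpw : HasPathDecompOfWidth G k)
    (I J : Finset V) (hI : IsIndepSet G I) (hJ : IsIndepSet G J)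
    (hcard : I.card = J.card) :
    TARReconf G (max k 1) I J := by
  obtain ⟨lo, hi, hlh, hadj, hload⟩ := hpw.exists_intervals
  have hload' : ∀ A t, (stab lo hi A t).card ≤ max k 1 + 1 :=
    fun A t => (hload A t).trans (by omega)
  have hPQ : (meeting lo hi (I \ J) (J \ I)).card ≤ (J \ I).card + 0 := by
    simpa [← card_sdiff_comm hcard] using card_le_card (meeting_subset (I \ J) (J \ I))
  have hchain := reflTransGen_insertStep_fewMeeting hlh hload' disjoint_sdiff_sdiff hPQ
  have hswap : ReflTransGen (TARStep G (I.card - max k 1)) (hybrid lo hi I J ∅)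
      (hybrid lo hi I J (J \ I)) :=
    ReflTransGen.lift' (hybrid lo hi I J)
      (fun _ _ h => reflTransGen_tarStep_hybrid hadj hI hJ h) _ _ hchain
  rw [hybrid, meeting_empty, sdiff_empty, union_empty] at hswap
  refine tarReconf_of_reflTransGen G hI (hswap.trans ?_)
  exact reflTransGen_tarStep_of_superset G subset_hybrid_sdiff
    (isIndepSet_hybrid hadj hI hJ sdiff_subset) (by omega)

/-- the TAR reconfiguration threshold of any graph is at most
`max (pw G) 1`: if `G` has a path decomposition of width `k`, then any two equal-size
independent sets can be `max k 1`-TAR reconfigured into each other. -/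
theorem tar_le_pathwidth {V : Type*} [Fintype V] [DecidableEq V] (G : SimpleGraph V)
    (k : ℕ) (hpw : HasPathDecompOfWidth G k)
    (I J : Finset V) (hI : IsIndepSet G I) (hJ : IsIndepSet G J)
    (hcard : I.card = J.card) :
    TARReconf G (max k 1) I J :=
  tar_le_pathwidth_general G k hpw I J hI hJ hcard
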